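/- arXiv:1703.07262 — 7 statements merged into one kernel-verified Lean document; each statement's English description precedes it below -/
import Mathlib

section
/- For every integer q ≥ 0 and all real x, y, and t, the exponential generating function of the hybrid polynomials satisfies ∑_{n=0}^∞ (t^n/n!) P_n^{(q)}(x,y) = C_q(y t²) · e^{x t}, where C_q(z) = ∑_{r=0}^∞ z^r/(r!·(q+r)!) is the Bessel–Tricomi function (both series converge absolutely for all arguments). -/
open Finset

/-- The hybrid polynomials
`P_n^{(q)}(x,y) = n! ∑_{r=0}^{⌊n/2⌋} x^{n-2r} y^r / ((n-2r)!·r!·(r+q)!)`. -/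
noncomputable def hybridP (q n : ℕ) (x y : ℝ) : ℝ :=
  (n.factorial : ℝ) * ∑ r ∈ range (n / 2 + 1),
    x ^ (n - 2 * r) * y ^ r /
      (((n - 2 * r).factorial : ℝ) * (r.factorial : ℝ) * ((r + q).factorial : ℝ))

/-- The Bessel–Tricomi function `C_q(z) = ∑_{r=0}^∞ z^r/(r!·(q+r)!)`. -/
noncomputable def besselTricomi (q : ℕ) (z : ℝ) : ℝ :=
  ∑' r : ℕ, z ^ r / ((r.factorial : ℝ) * ((q + r).factorial : ℝ))

/-!
The `n`-th term `t^n/n! · P_n^{(q)}(x,y)` equals `∑_{2r ≤ n} a_r b_{n-2r}` with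
`a_r = (y t²)^r/(r!(q+r)!)` and `b_m = (x t)^m/m!`, the terms of the series of `C_q(y t²)` and
of `e^{x t}`. Both series converge absolutely, so their product may be summed over the pairs
`(r, m)` grouped by `n = m + 2r`.
-/

open scoped Nat

theorem hasSum_sum_range_div_two_mul_of_summable_norm {R : Type*} [NormedRing R]
    [CompleteSpace R] {f g : ℕ → R} (hf : Summable fun r => ‖f r‖)
    (hg : Summable fun m => ‖g m‖) :
    HasSum (fun n => ∑ r ∈ range (n / 2 + 1), f r * g (n - 2 * r))
      ((∑' r, f r) * ∑' m, g m) := by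
  set F : ℕ × ℕ → R := fun p => if 2 * p.2 ≤ p.1 then f p.2 * g (p.1 - 2 * p.2) else 0
  have hprod : HasSum (fun p : ℕ × ℕ => f p.1 * g p.2) ((∑' r, f r) * ∑' m, g m) :=
    hf.of_norm.hasSum.mul hg.of_norm.hasSum (summable_mul_of_summable_norm hf hg)
  have hinj : Function.Injective fun p : ℕ × ℕ => (p.2 + 2 * p.1, p.1) := by
    rintro ⟨r, m⟩ ⟨r', m'⟩ h
    simp only [Prod.mk.injEq] at h
    ext <;> omega
  have hsupp : ∀ p ∉ Set.range fun p : ℕ × ℕ => (p.2 + 2 * p.1, p.1), F p = 0 := by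
    rintro ⟨n, r⟩ hp
    exact if_neg fun hr => hp ⟨(r, n - 2 * r), Prod.ext (Nat.sub_add_cancel hr) rfl⟩
  have hF : HasSum F ((∑' r, f r) * ∑' m, g m) := by
    rw [← hinj.hasSum_iff hsupp]
    refine hprod.congr_fun fun p => ?_
    simp [F]
  refine hF.prod_fiberwise fun n => ?_
  convert hasSum_sum_of_ne_finset_zero (L := SummationFilter.unconditional ℕ)
    (s := range (n / 2 + 1)) fun r hr => ?_ using 1
  · refine sum_congr rfl fun r hr => (if_pos ?_).symm
    simp only [mem_range] at hr
    omega
  · refine if_neg ?_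
    simp only [mem_range] at hr
    omega

theorem summable_norm_pow_div_factorial_mul_factorial (q : ℕ) (z : ℝ) :
    Summable fun r : ℕ => ‖z ^ r / ((r ! : ℝ) * (q + r)!)‖ := by
  refine (NormedSpace.norm_expSeries_div_summable z).of_nonneg_of_le (fun _ => norm_nonneg _)
    fun r => ?_
  simp only [norm_div, norm_mul, Real.norm_natCast]
  gcongr
  exact le_mul_of_one_le_right (by positivity) (mod_cast (q + r).factorial_pos)

theorem pow_div_factorial_mul_hybridP (q n : ℕ) (x y t : ℝ) :
    t ^ n / n ! * hybridP q n x y =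
      ∑ r ∈ range (n / 2 + 1), (y * t ^ 2) ^ r / ((r ! : ℝ) * (q + r)!) *
        ((x * t) ^ (n - 2 * r) / (n - 2 * r)!) := by
  rw [hybridP, ← mul_assoc, div_mul_cancel₀ _ (by positivity), mul_sum]
  refine sum_congr rfl fun r hr => ?_
  have h2r : 2 * r ≤ n := by
    simp only [mem_range] at hr
    omega
  rw [add_comm r q]
  nth_rewrite 1 [← Nat.sub_add_cancel h2r]
  field_simp
  ring

/-- for every `q ≥ 0` and all real `x, y, t`,
`∑_{n=0}^∞ (t^n/n!) P_n^{(q)}(x,y) = C_q(y t²) e^{x t}`. -/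
theorem hybrid_egf (q : ℕ) (x y t : ℝ) :
    HasSum (fun n : ℕ => t ^ n / (n.factorial : ℝ) * hybridP q n x y)
      (besselTricomi q (y * t ^ 2) * Real.exp (x * t)) := by
  rw [Real.exp_eq_exp_ℝ, ← (NormedSpace.expSeries_div_hasSum_exp (x * t)).tsum_eq]
  simp only [pow_div_factorial_mul_hybridP]
  exact (hasSum_sum_range_div_two_mul_of_summable_norm
    (summable_norm_pow_div_factorial_mul_factorial q (y * t ^ 2))
    (NormedSpace.norm_expSeries_div_summable (x * t)) :)
end

section
/- For every integer l ≥ 0 and all real x, y, t, the shifted-index exponential generating function of the two-variable Hermite polynomials satisfies ∑_{n=0}^∞ (t^n/n!) H_{n+l}(x,y) = H_l(x + 2yt, y) · e^{xt + yt²}. -/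
open Finset

/-- The two-variable Hermite (Kampé de Fériet) polynomials
`H_n(x,y) = n! ∑_{r=0}^{⌊n/2⌋} x^{n-2r} y^r / ((n-2r)!·r!)`. -/
noncomputable def hermite2 (n : ℕ) (x y : ℝ) : ℝ :=
  (n.factorial : ℝ) * ∑ r ∈ range (n / 2 + 1),
    x ^ (n - 2 * r) * y ^ r / (((n - 2 * r).factorial : ℝ) * (r.factorial : ℝ))

/-!
Write `E(t) = exp (x t + y t²)`. For `l = 0` the identity says that `H_n / n!` is the coefficient
of `tⁿ` in `exp (x t) · exp (y t²)`, which is the product of the two exponential series grouped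
along `a + 2 r = n`. Multiplying an exponential generating function `∑ aₙ tⁿ / n!` by `t` turns
its coefficients into `n aₙ₋₁`, so the recurrence `H_{m+1} = x H_m + 2 y m H_{m-1}` shows that the
series for the shifts `l - 1` and `l` determine the one for `l + 1`, with sum
`((x + 2 y t) H_l(x + 2 y t, y) + 2 y l H_{l-1}(x + 2 y t, y)) E(t) = H_{l+1}(x + 2 y t, y) E(t)`.
-/

open Nat

theorem Nat.succ_descFactorial_succ_eq_add (n k : ℕ) :
    (n + 1).descFactorial (k + 1) = n.descFactorial (k + 1) + (k + 1) * n.descFactorial k := by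
  rw [succ_descFactorial_succ, descFactorial_succ, ← add_mul]
  rcases le_or_gt k n with h | h
  · rw [show n - k + (k + 1) = n + 1 by omega]
  · simp [descFactorial_eq_zero_iff_lt.2 h]

theorem Nat.descFactorial_mul_pow_sub {R : Type*} [Semiring R] (x : R) (m k : ℕ) :
    (m.descFactorial (k + 1) : R) * x ^ (m - k) =
      m.descFactorial (k + 1) * x ^ (m - (k + 1)) * x := by
  rcases le_or_gt (k + 1) m with h | h
  · rw [mul_assoc, ← pow_succ, show m - (k + 1) + 1 = m - k by omega]
  · rw [descFactorial_eq_zero_iff_lt.2 h]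
    simp

/-- Writing `n! / (n - 2r)!` as a falling factorial makes the summand vanish for `2 r > n`, so
`hermite2 n` is its sum over any long enough range. -/
noncomputable def hermite2Term (n r : ℕ) (x y : ℝ) : ℝ :=
  n.descFactorial (2 * r) / r ! * x ^ (n - 2 * r) * y ^ r

lemma hermite2_eq_sum_hermite2Term (x y : ℝ) {n N : ℕ} (hN : n / 2 < N) :
    hermite2 n x y = ∑ r ∈ range N, hermite2Term n r x y := by
  rw [hermite2, mul_sum]
  refine (sum_congr rfl fun r hr => ?_).trans
    (sum_subset (range_subset_range.2 (by omega)) fun r _ hr => ?_)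
  · rw [hermite2Term, ← factorial_mul_descFactorial (by grind : 2 * r ≤ n)]
    push_cast
    field_simp
  · rw [mem_range, not_lt] at hr
    simp [hermite2Term, descFactorial_eq_zero_iff_lt.2 (by omega : n < 2 * r)]

lemma hermite2Term_succ_zero (m : ℕ) (x y : ℝ) :
    hermite2Term (m + 1) 0 x y = x * hermite2Term m 0 x y := by
  simp only [hermite2Term, mul_zero, descFactorial_zero, tsub_zero, pow_succ]
  ring

lemma hermite2Term_add_two_succ (n r : ℕ) (x y : ℝ) :
    hermite2Term (n + 2) (r + 1) x y =
      x * hermite2Term (n + 1) (r + 1) x y + 2 * y * (n + 1) * hermite2Term n r x y := by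
  have hx := descFactorial_mul_pow_sub x (n + 1) (2 * r + 1)
  rw [show n + 1 - (2 * r + 1) = n - 2 * r by omega] at hx
  rw [hermite2Term, hermite2Term, hermite2Term, show 2 * (r + 1) = 2 * r + 1 + 1 by ring,
    succ_descFactorial_succ_eq_add (n + 1), succ_descFactorial_succ n (2 * r), factorial_succ,
    show n + 2 - (2 * r + 1 + 1) = n - 2 * r by omega]
  push_cast at hx ⊢
  field_simp
  linear_combination y ^ (r + 1) * hx

lemma hermite2_add_two (n : ℕ) (x y : ℝ) :
    hermite2 (n + 2) x y = x * hermite2 (n + 1) x y + 2 * y * (n + 1) * hermite2 n x y := by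
  rw [hermite2_eq_sum_hermite2Term x y (N := n + 2) (by omega),
    hermite2_eq_sum_hermite2Term x y (N := n + 2) (by omega),
    hermite2_eq_sum_hermite2Term x y (N := n + 1) (by omega), sum_range_succ' _ (n + 1),
    sum_range_succ' _ (n + 1)]
  simp only [hermite2Term_add_two_succ, hermite2Term_succ_zero, sum_add_distrib, mul_add, mul_sum]
  ring

lemma hermite2_zero (x y : ℝ) : hermite2 0 x y = 1 := by
  simp [hermite2]

-- For `n = 0` the junk value `hermite2 (0 - 1)` is multiplied by `0`.
lemma hermite2_succ (n : ℕ) (x y : ℝ) :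
    hermite2 (n + 1) x y = x * hermite2 n x y + 2 * y * n * hermite2 (n - 1) x y := by
  cases n with
  | zero => simp [hermite2]
  | succ n => simpa using hermite2_add_two n x y

theorem HasSum.sum_range_sub_two_mul {α : Type*} [AddCommGroup α] [UniformSpace α]
    [IsUniformAddGroup α] [CompleteSpace α] [T2Space α] {f : ℕ × ℕ → α} {a : α}
    (h : HasSum f a) : HasSum (fun n => ∑ r ∈ range (n / 2 + 1), f (n - 2 * r, r)) a := by
  convert h.tsum_fiberwise (fun p => p.1 + 2 * p.2) with n
  have hfiber : (fun p : ℕ × ℕ => p.1 + 2 * p.2) ⁻¹' {n} =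
      ((range (n / 2 + 1)).image fun r => (n - 2 * r, r) : Finset (ℕ × ℕ)) := by
    ext ⟨a, r⟩
    simp only [Set.mem_preimage, Set.mem_singleton_iff, coe_image, coe_range, Set.mem_image,
      Set.mem_Iio, Prod.mk.injEq]
    constructor
    · rintro rfl
      exact ⟨r, by omega, by omega, rfl⟩
    · rintro ⟨r, hr, rfl, rfl⟩
      omega
  rw [hfiber, Finset.tsum_subtype', sum_image fun r _ s _ h => (Prod.mk.inj h).2]

theorem HasSum.pow_div_factorial_mul_pred {a : ℕ → ℝ} {t S : ℝ}
    (h : HasSum (fun n => t ^ n / n ! * a n) S) :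
    HasSum (fun n => t ^ n / n ! * (n * a (n - 1))) (t * S) := by
  rw [← hasSum_nat_add_iff' 1, sum_range_one, Nat.cast_zero, zero_mul, mul_zero, sub_zero]
  refine (h.mul_left t).congr_fun fun n => ?_
  rw [add_tsub_cancel_right, pow_succ, factorial_succ]
  push_cast
  field_simp

lemma hasSum_hermite2_egf (x y t : ℝ) :
    HasSum (fun n => t ^ n / n ! * hermite2 n x y) (Real.exp (x * t + y * t ^ 2)) := by
  have hexp (c : ℝ) : HasSum (fun n => c ^ n / n !) (Real.exp c) := by
    rw [Real.exp_eq_exp_ℝ]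
    exact NormedSpace.expSeries_div_hasSum_exp c
  have hprod := (hexp (x * t)).mul (hexp (y * t ^ 2)) (summable_mul_of_summable_norm
    (Real.summable_pow_div_factorial _).norm (Real.summable_pow_div_factorial _).norm)
  rw [← Real.exp_add] at hprod
  refine hprod.sum_range_sub_two_mul.congr_fun fun n => ?_
  rw [hermite2, ← mul_assoc, div_mul_cancel₀ _ (by positivity), mul_sum]
  refine sum_congr rfl fun r hr => ?_
  have hn : t ^ n = t ^ (n - 2 * r) * (t ^ 2) ^ r := by
    rw [← pow_mul, ← pow_add, Nat.sub_add_cancel (by grind)]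
  rw [hn]
  ring

theorem HasSum.hermite2_shift_succ {x y t A B : ℝ} {l : ℕ}
    (hB : HasSum (fun n => t ^ n / n ! * hermite2 (n + l) x y) B)
    (hA : HasSum (fun n => t ^ n / n ! * hermite2 (n + (l - 1)) x y) A) :
    HasSum (fun n => t ^ n / n ! * hermite2 (n + (l + 1)) x y)
      ((x + 2 * y * t) * B + 2 * y * l * A) := by
  rw [show (x + 2 * y * t) * B + 2 * y * l * A = x * B + 2 * y * l * A + 2 * y * (t * B) by ring]
  refine (((hB.mul_left x).add (hA.mul_left (2 * y * l))).add
    (hB.pow_div_factorial_mul_pred.mul_left (2 * y))).congr_fun fun n => ?_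
  have hsplit : ((n + l : ℕ) : ℝ) * hermite2 (n + l - 1) x y =
      l * hermite2 (n + (l - 1)) x y + n * hermite2 (n - 1 + l) x y := by
    rcases n with _ | n <;> rcases l with _ | l <;> simp [add_assoc, add_comm 1]
    · ring
  rw [← add_assoc, hermite2_succ, mul_assoc (2 * y), hsplit]
  ring

/-- for every `l ≥ 0` and all real `x, y, t`,
`∑_{n=0}^∞ (t^n/n!) H_{n+l}(x,y) = H_l(x + 2yt, y) e^{xt + yt²}`. -/
theorem hermite2_shifted_egf (l : ℕ) (x y t : ℝ) :
    HasSum (fun n : ℕ => t ^ n / (n.factorial : ℝ) * hermite2 (n + l) x y)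
      (hermite2 l (x + 2 * y * t) y * Real.exp (x * t + y * t ^ 2)) := by
  induction l using Nat.strong_induction_on with
  | _ l ih =>
    cases l with
    | zero => simpa [hermite2_zero] using hasSum_hermite2_egf x y t
    | succ l =>
      have h := (ih l (by omega)).hermite2_shift_succ (ih (l - 1) (by omega))
      rw [hermite2_succ]
      convert h using 1
      ring
end

section
/- For every integer n ≥ 0, the even-index Motzkin numbers satisfy m_{2n} = ∑_{r=0}^{n} binomial(n,r)² · 2^r · r! · (n-r)! · ∑_{s=0}^{⌊(n-r)/2⌋} m_{n-r}^{(r+s+1)} / ((n-r-2s)!·s!), where the identity holds in the rational numbers. -/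
open Finset

/-- The associated Motzkin numbers
`m_n^{(q)} = n! ∑_{r=0}^{⌊n/2⌋} 1/((n-2r)!·r!·(r+q)!)`, as rational numbers. -/
noncomputable def motzkinAssoc (q n : ℕ) : ℚ :=
  (n.factorial : ℚ) * ∑ r ∈ range (n / 2 + 1),
    1 / (((n - 2 * r).factorial : ℚ) * (r.factorial : ℚ) * ((r + q).factorial : ℚ))

/-- The Motzkin numbers `m_n = m_n^{(1)}`. -/
noncomputable def motzkin (n : ℕ) : ℚ := motzkinAssoc 1 n

/-!
Group both sides by `k = r + s + t`. Unfolding `motzkinAssoc`, the right-hand side is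
`∑_{r,s,t} c(r,s,t) / (r+s+t+1)!` with `c = duplicationTerm n`, while
`m_{2n} = ∑_k (2n)^{(2k)} / (k! (k+1)!)`. So it suffices that
`∑_{r+s+t=k} c(r,s,t) = (2n)^{(2k)} / k!`, which is the coefficient of `X^n` in
`(X+1)^{2n} = (2X + (X^2 + 1))^k (X+1)^{2n-2k}` once the first factor is expanded trinomially.
-/

open Nat

open Polynomial in
theorem choose_two_mul_add_eq_sum (k m j : ℕ) :
    (2 * k + m).choose j = ∑ r ∈ range (k + 1), ∑ s ∈ range (k - r + 1),
      k.choose r * (k - r).choose s * 2 ^ r *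
        if r + 2 * s ≤ j then m.choose (j - (r + 2 * s)) else 0 := by
  have hsq : ((2 * X + (X ^ 2 + 1)) ^ k : ℕ[X]) =
      ∑ r ∈ range (k + 1), ∑ s ∈ range (k - r + 1),
        C (k.choose r * (k - r).choose s * 2 ^ r) * X ^ (r + 2 * s) := by
    rw [add_pow]
    refine sum_congr rfl fun r _ => ?_
    rw [add_pow, mul_sum, sum_mul]
    refine sum_congr rfl fun s _ => ?_
    simp only [one_pow, mul_one, mul_pow, map_mul, map_pow, map_ofNat, ← C_eq_natCast,
      Nat.cast_id]
    ring
  have hpow : (X + 1 : ℕ[X]) ^ (2 * k + m) = (2 * X + (X ^ 2 + 1)) ^ k * (X + 1) ^ m := by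
    rw [pow_add, pow_mul]; ring
  have hcoeff := coeff_X_add_one_pow ℕ (2 * k + m) j
  rw [Nat.cast_id] at hcoeff
  rw [← hcoeff, hpow, hsq, sum_mul, finsetSum_coeff]
  refine sum_congr rfl fun r _ => ?_
  rw [sum_mul, finsetSum_coeff]
  refine sum_congr rfl fun s _ => ?_
  rw [mul_assoc, coeff_C_mul, coeff_X_pow_mul', coeff_X_add_one_pow, Nat.cast_id]

theorem cast_descFactorial_eq_div {K : Type*} [DivisionRing K] [CharZero K] {n a : ℕ}
    (h : a ≤ n) : (n.descFactorial a : K) = n ! / (n - a)! := by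
  rw [eq_div_iff (Nat.cast_ne_zero.mpr (factorial_ne_zero _)), ← Nat.cast_mul, mul_comm,
    factorial_mul_descFactorial h]

/-- `n.descFactorial a = n! / (n - a)!` vanishes for `a > n`, so sums of these terms may be taken
over any range containing `r + 2 * s ≤ n, r + 2 * t ≤ n`. -/
noncomputable def duplicationTerm (n r s t : ℕ) : ℚ :=
  2 ^ r * n.descFactorial (r + 2 * s) * n.descFactorial (r + 2 * t) / (r ! * s ! * t !)

theorem duplicationTerm_eq_zero {n r s t : ℕ} (h : n < r + 2 * s ∨ n < r + 2 * t) :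
    duplicationTerm n r s t = 0 := by
  rcases h with h | h <;> simp [duplicationTerm, descFactorial_eq_zero_iff_lt.mpr h]

theorem duplicationTerm_eq_choose_mul {n k r s t : ℕ} (hk : k ≤ n) (hrst : r + s + t = k) :
    duplicationTerm n r s t = ((k.choose r * (k - r).choose s * 2 ^ r *
        if r + 2 * s ≤ n then (2 * n - 2 * k).choose (n - (r + 2 * s)) else 0 : ℕ) : ℚ) *
      (n ! ^ 2 / (k ! * (2 * n - 2 * k)!)) := by
  subst hrst
  by_cases hs : r + 2 * s ≤ n
  · by_cases ht : r + 2 * t ≤ n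
    · rw [if_pos hs, duplicationTerm, cast_descFactorial_eq_div hs, cast_descFactorial_eq_div ht]
      push_cast
      rw [Nat.cast_choose ℚ (by omega : r ≤ r + s + t),
        Nat.cast_choose ℚ (by omega : s ≤ r + s + t - r),
        Nat.cast_choose ℚ (by omega : n - (r + 2 * s) ≤ 2 * n - 2 * (r + s + t)),
        show 2 * n - 2 * (r + s + t) - (n - (r + 2 * s)) = n - (r + 2 * t) by omega,
        show r + s + t - r - s = t by omega]
      field_simp
    · rw [duplicationTerm_eq_zero (Or.inr (by omega)),
        Nat.choose_eq_zero_of_lt (by omega : 2 * n - 2 * (r + s + t) < n - (r + 2 * s))]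
      simp
  · rw [if_neg hs, duplicationTerm_eq_zero (Or.inl (by omega))]
    simp

theorem sum_duplicationTerm {n k : ℕ} (hk : k ≤ n) :
    ∑ r ∈ range (k + 1), ∑ s ∈ range (k - r + 1), duplicationTerm n r s (k - r - s) =
      (2 * n).descFactorial (2 * k) / k ! := by
  have hterm : ∀ r ∈ range (k + 1), ∀ s ∈ range (k - r + 1),
      duplicationTerm n r s (k - r - s) = ((k.choose r * (k - r).choose s * 2 ^ r *
        if r + 2 * s ≤ n then (2 * n - 2 * k).choose (n - (r + 2 * s)) else 0 : ℕ) : ℚ) *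
      (n ! ^ 2 / (k ! * (2 * n - 2 * k)!)) := fun r hr s hs =>
    duplicationTerm_eq_choose_mul hk (by simp only [mem_range] at hr hs; omega)
  rw [sum_congr rfl fun r hr => sum_congr rfl (hterm r hr)]
  simp only [← sum_mul, ← Nat.cast_sum]
  rw [← choose_two_mul_add_eq_sum, show 2 * k + (2 * n - 2 * k) = 2 * n by omega,
    Nat.cast_choose ℚ (by omega : n ≤ 2 * n),
    cast_descFactorial_eq_div (by omega : 2 * k ≤ 2 * n), show 2 * n - n = n by omega]
  field_simp

theorem sum_range_diag_flip_three {M : Type*} [AddCommMonoid M] (N : ℕ)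
    (f : ℕ → ℕ → ℕ → M) :
    ∑ k ∈ range N, ∑ r ∈ range (k + 1), ∑ s ∈ range (k - r + 1), f r s (k - r - s) =
      ∑ r ∈ range N, ∑ s ∈ range (N - r), ∑ t ∈ range (N - r - s), f r s t := by
  rw [sum_range_diag_flip N fun r j => ∑ s ∈ range (j + 1), f r s (j - s)]
  exact sum_congr rfl fun r _ => sum_range_diag_flip (N - r) (f r)

theorem sum_range_triangle_eq_sum_range_square {M : Type*} [AddCommMonoid M] {m : ℕ}
    (g : ℕ → ℕ → M) (hg : ∀ s t, m < 2 * s ∨ m < 2 * t → g s t = 0) :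
    ∑ s ∈ range (m + 1), ∑ t ∈ range (m + 1 - s), g s t =
      ∑ s ∈ range (m / 2 + 1), ∑ t ∈ range (m / 2 + 1), g s t := by
  symm
  calc ∑ s ∈ range (m / 2 + 1), ∑ t ∈ range (m / 2 + 1), g s t
      = ∑ s ∈ range (m / 2 + 1), ∑ t ∈ range (m + 1 - s), g s t :=
        sum_congr rfl fun s hs => sum_subset (range_subset_range.2 (by rw [mem_range] at hs; omega))
          fun t _ ht => hg s t (Or.inr (by rw [mem_range] at ht; omega))
    _ = ∑ s ∈ range (m + 1), ∑ t ∈ range (m + 1 - s), g s t :=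
        sum_subset (range_subset_range.2 (by omega))
          fun s _ hs => sum_eq_zero fun t _ => hg s t (Or.inl (by rw [mem_range] at hs; omega))

theorem motzkin_two_mul_eq_sum_descFactorial (n : ℕ) :
    motzkin (2 * n) =
      ∑ k ∈ range (n + 1), ((2 * n).descFactorial (2 * k) : ℚ) / k ! / (k + 1)! := by
  rw [motzkin, motzkinAssoc, show 2 * n / 2 = n by omega, mul_sum]
  refine sum_congr rfl fun k hk => ?_
  rw [cast_descFactorial_eq_div (by rw [mem_range] at hk; omega)]
  field_simp

theorem motzkin_two_mul_eq_sum_duplicationTerm (n : ℕ) :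
    motzkin (2 * n) = ∑ k ∈ range (n + 1), ∑ r ∈ range (k + 1), ∑ s ∈ range (k - r + 1),
      duplicationTerm n r s (k - r - s) / (r + s + (k - r - s) + 1)! := by
  rw [motzkin_two_mul_eq_sum_descFactorial]
  refine sum_congr rfl fun k hk => ?_
  rw [mem_range] at hk
  rw [← sum_duplicationTerm (by omega), sum_div]
  refine sum_congr rfl fun r hr => ?_
  rw [sum_div]
  refine sum_congr rfl fun s hs => ?_
  rw [mem_range] at hr hs
  rw [show r + s + (k - r - s) = k by omega]

theorem choose_sq_mul_sum_motzkinAssoc {n r : ℕ} (hr : r ≤ n) :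
    (n.choose r : ℚ) ^ 2 * 2 ^ r * r ! * (n - r)! *
        ∑ s ∈ range ((n - r) / 2 + 1),
          motzkinAssoc (r + s + 1) (n - r) / ((n - r - 2 * s)! * s !) =
      ∑ s ∈ range ((n - r) / 2 + 1), ∑ t ∈ range ((n - r) / 2 + 1),
        duplicationTerm n r s t / (r + s + t + 1)! := by
  rw [mul_sum]
  refine sum_congr rfl fun s hs => ?_
  rw [motzkinAssoc, mul_sum, sum_div, mul_sum]
  refine sum_congr rfl fun t ht => ?_
  rw [mem_range] at hs ht
  rw [duplicationTerm, cast_descFactorial_eq_div (by omega),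
    cast_descFactorial_eq_div (by omega), Nat.cast_choose ℚ hr,
    show n - (r + 2 * s) = n - r - 2 * s by omega, show n - (r + 2 * t) = n - r - 2 * t by omega,
    show t + (r + s + 1) = r + s + t + 1 by omega]
  field_simp

/-- the even-index Motzkin numbers satisfy
`m_{2n} = ∑_{r=0}^{n} C(n,r)² 2^r r! (n-r)! ∑_{s=0}^{⌊(n-r)/2⌋}
m_{n-r}^{(r+s+1)} / ((n-r-2s)!·s!)`. -/
theorem motzkin_even_duplication (n : ℕ) :
    motzkin (2 * n) =
      ∑ r ∈ range (n + 1),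
        ((n.choose r : ℚ)) ^ 2 * 2 ^ r * (r.factorial : ℚ) * ((n - r).factorial : ℚ) *
          ∑ s ∈ range ((n - r) / 2 + 1),
            motzkinAssoc (r + s + 1) (n - r) /
              (((n - r - 2 * s).factorial : ℚ) * (s.factorial : ℚ)) := by
  set f : ℕ → ℕ → ℕ → ℚ := fun r s t => duplicationTerm n r s t / (r + s + t + 1)!
    with hf
  calc motzkin (2 * n)
      = ∑ k ∈ range (n + 1), ∑ r ∈ range (k + 1), ∑ s ∈ range (k - r + 1),
          f r s (k - r - s) := motzkin_two_mul_eq_sum_duplicationTerm n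
    _ = ∑ r ∈ range (n + 1), ∑ s ∈ range (n - r + 1), ∑ t ∈ range (n - r + 1 - s),
          f r s t := by
        rw [sum_range_diag_flip_three]
        refine sum_congr rfl fun r hr => ?_
        rw [show n + 1 - r = n - r + 1 by rw [mem_range] at hr; omega]
    _ = ∑ r ∈ range (n + 1), ∑ s ∈ range ((n - r) / 2 + 1),
          ∑ t ∈ range ((n - r) / 2 + 1), f r s t :=
        sum_congr rfl fun r _ => sum_range_triangle_eq_sum_range_square _ fun s t h => by
          simp only [hf, zero_div,
            duplicationTerm_eq_zero (by omega : n < r + 2 * s ∨ n < r + 2 * t)]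
    _ = _ := sum_congr rfl fun r hr =>
        (choose_sq_mul_sum_motzkinAssoc (by rw [mem_range] at hr; omega)).symm
end

section
/- For all integers n ≥ 1 and q ≥ 0, the associated Motzkin numbers satisfy the recurrence m_{n+1}^{(q)} = m_n^{(q)} + 2·n·m_{n-1}^{(q+1)} (an identity among rational numbers). -/
open Finset

/-!
With `n! / (n - 2r)!` written as the falling factorial `n.descFactorial (2r)`,
`m_n^{(q)} = ∑_r n.descFactorial (2r) / (r! (r+q)!)`, and `r` may run over any initial segment
of `ℕ` past `n / 2` because the falling factorial vanishes there. The Pascal rule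
`(n+1).descFactorial k = n.descFactorial k + k · n.descFactorial (k-1)` splits each summand of
`m_{n+1}^{(q)}` into the summand of `m_n^{(q)}` and
`2r · n.descFactorial (2r-1) / (r! (r+q)!) = 2n · (n-1).descFactorial (2r-2) / ((r-1)! (r-1+q+1)!)`,
the summand of `2n m_{n-1}^{(q+1)}` shifted by one.
-/

namespace Nat

theorem succ_descFactorial_succ_eq_add_s7 (n k : ℕ) :
    (n + 1).descFactorial (k + 1) = n.descFactorial (k + 1) + (k + 1) * n.descFactorial k := by
  rw [succ_descFactorial_succ, descFactorial_succ]
  rcases le_or_gt k n with hk | hk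
  · rw [← add_mul]
    congr 1
    omega
  · simp [descFactorial_eq_zero_iff_lt.mpr hk]

theorem descFactorial_succ_eq_mul_pred (n k : ℕ) :
    n.descFactorial (k + 1) = n * (n - 1).descFactorial k := by
  cases n with
  | zero => simp
  | succ n => exact succ_descFactorial_succ n k

end Nat

def motzkinTerm (q n r : ℕ) : ℚ :=
  (n.descFactorial (2 * r) : ℚ) / ((r.factorial : ℚ) * (r + q).factorial)

theorem motzkinAssoc_eq_sum_motzkinTerm (q n M : ℕ) (hM : n / 2 < M) :
    motzkinAssoc q n = ∑ r ∈ range M, motzkinTerm q n r := by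
  calc motzkinAssoc q n = ∑ r ∈ range (n / 2 + 1), motzkinTerm q n r := by
        rw [motzkinAssoc, mul_sum]
        refine sum_congr rfl fun r hr => ?_
        have h2r : 2 * r ≤ n := by rw [mem_range] at hr; omega
        rw [motzkinTerm, ← Nat.factorial_mul_descFactorial h2r]
        push_cast
        field_simp
    _ = ∑ r ∈ range M, motzkinTerm q n r := by
        refine sum_subset (range_subset_range.mpr hM) fun r _ hr => ?_
        have : n < 2 * r := by rw [mem_range, not_lt] at hr; omega
        simp [motzkinTerm, Nat.descFactorial_eq_zero_iff_lt.mpr this]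

theorem motzkinTerm_zero (q n : ℕ) : motzkinTerm q n 0 = 1 / (q.factorial : ℚ) := by
  simp [motzkinTerm]

theorem motzkinTerm_succ_succ (q n r : ℕ) :
    motzkinTerm q (n + 1) (r + 1) =
      motzkinTerm q n (r + 1) + 2 * n * motzkinTerm (q + 1) (n - 1) r := by
  have hpascal : (n + 1).descFactorial (2 * (r + 1)) =
      n.descFactorial (2 * (r + 1)) + (2 * r + 2) * (n * (n - 1).descFactorial (2 * r)) := by
    rw [show 2 * (r + 1) = 2 * r + 1 + 1 by ring, Nat.succ_descFactorial_succ_eq_add_s7,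
      Nat.descFactorial_succ_eq_mul_pred n (2 * r)]
  simp only [motzkinTerm, hpascal, Nat.factorial_succ, show r + 1 + q = r + (q + 1) by ring]
  push_cast
  field_simp

theorem motzkinAssoc_recurrence_general (n q : ℕ) :
    motzkinAssoc q (n + 1) =
      motzkinAssoc q n + 2 * (n : ℚ) * motzkinAssoc (q + 1) (n - 1) := by
  rw [motzkinAssoc_eq_sum_motzkinTerm q (n + 1) (n + 2) (by omega),
    motzkinAssoc_eq_sum_motzkinTerm q n (n + 2) (by omega),
    motzkinAssoc_eq_sum_motzkinTerm (q + 1) (n - 1) (n + 1) (by omega),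
    sum_range_succ', sum_range_succ' _ (n + 1)]
  simp only [motzkinTerm_succ_succ, sum_add_distrib, motzkinTerm_zero, mul_sum]
  ring

/-- for `n ≥ 1` and `q ≥ 0`,
`m_{n+1}^{(q)} = m_n^{(q)} + 2 n m_{n-1}^{(q+1)}`. -/
theorem motzkinAssoc_recurrence (n q : ℕ) (hn : 1 ≤ n) :
    motzkinAssoc q (n + 1) =
      motzkinAssoc q n + 2 * (n : ℚ) * motzkinAssoc (q + 1) (n - 1) :=
  motzkinAssoc_recurrence_general n q
end

section
/- For all integers n ≥ 0 and p ≥ 0, the Motzkin numbers satisfy m_{n+p} = ∑_{s=0}^{min(n,p)} 2^s · s! · binomial(p,s) · binomial(n,s) · M_{p-s, n-s, s}, where M_{p,n,t} = p! ∑_{r=0}^{⌊p/2⌋} m_n^{(t+r+1)} / ((p-2r)!·r!) and the identity holds in the rational numbers. -/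
open Finset

/-- `M_{p,n,t} = p! ∑_{r=0}^{⌊p/2⌋} m_n^{(t+r+1)} / ((p-2r)!·r!)`. -/
noncomputable def MAux (p n t : ℕ) : ℚ :=
  (p.factorial : ℚ) * ∑ r ∈ range (p / 2 + 1),
    motzkinAssoc (t + r + 1) n / (((p - 2 * r).factorial : ℚ) * (r.factorial : ℚ))

/-!
Writing `m_n^{(q)} = ∑_j n^{(2j)} / (j! (j+q)!)` with falling factorials `n^{(i)}`, both sides
become the sum over triples `(s, r, j)` of `2^s p^{(s+2r)} n^{(s+2j)} / (s! r! j! (s+r+j+1)!)`.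
For the right-hand side this is a rearrangement of factorials. For the left-hand side, grouping
the triples by `k = s + r + j` reduces it to
`(p+n)^{(2k)} = ∑_{s+r+j=k} k!/(s! r! j!) 2^s p^{(s+2r)} n^{(s+2j)}`,
which is the trinomial expansion `(x+y)^{2k} = (2xy + (x² + y²))^k` pushed through the linear
map `x^a y^b ↦ p^{(a)} n^{(b)}`; by Vandermonde's identity this map sends `(x+y)^m` to
`(p+n)^{(m)}`.
-/

theorem Nat.descFactorial_add (a s m : ℕ) :
    a.descFactorial (s + m) = a.descFactorial s * (a - s).descFactorial m := by
  rw [← Nat.descFactorial_mul_descFactorial (Nat.le_add_right s m), Nat.add_sub_cancel_left,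
    Nat.mul_comm]

theorem Nat.add_descFactorial_eq_sum_antidiagonal (a b m : ℕ) :
    (a + b).descFactorial m =
      ∑ ij ∈ antidiagonal m, m.choose ij.1 * (a.descFactorial ij.1 * b.descFactorial ij.2) := by
  rw [Nat.descFactorial_eq_factorial_mul_choose, Nat.add_choose_eq, mul_sum]
  refine sum_congr rfl fun ij hij => ?_
  rw [HasAntidiagonal.mem_antidiagonal] at hij
  subst hij
  rw [Nat.descFactorial_eq_factorial_mul_choose, Nat.descFactorial_eq_factorial_mul_choose,
    ← Nat.add_choose_mul_factorial_mul_factorial, Nat.choose_symm_add]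
  ring

theorem Nat.cast_factorial_div_factorial_sub {K : Type*} [Field K] [CharZero K] {m k : ℕ}
    (h : k ≤ m) : (m.factorial : K) / ((m - k).factorial : K) = m.descFactorial k := by
  rw [div_eq_iff (Nat.cast_ne_zero.2 (Nat.factorial_ne_zero _)),
    ← Nat.factorial_mul_descFactorial h]
  push_cast
  ring

section FallingEval

open MvPolynomial

noncomputable def fallingEval (a b : ℕ) : MvPolynomial (Fin 2) ℕ →ₗ[ℕ] ℕ :=
  (basisMonomials (Fin 2) ℕ).constr ℕ fun d => a.descFactorial (d 0) * b.descFactorial (d 1)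

theorem fallingEval_smul_X_pow_mul_X_pow (a b c i j : ℕ) :
    fallingEval a b (c • (X 0 ^ i * X 1 ^ j)) = c * (a.descFactorial i * b.descFactorial j) := by
  have h := (basisMonomials (Fin 2) ℕ).constr_basis ℕ
    (fun d => a.descFactorial (d 0) * b.descFactorial (d 1))
    (Finsupp.single 0 i + Finsupp.single 1 j)
  rw [coe_basisMonomials] at h
  rw [map_nsmul, X_pow_eq_monomial, X_pow_eq_monomial, monomial_mul, one_mul, fallingEval, h]
  simp

theorem fallingEval_add_pow (a b m : ℕ) :
    fallingEval a b ((X 0 + X 1) ^ m) = (a + b).descFactorial m := by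
  rw [(Commute.all _ _).add_pow', map_sum, Nat.add_descFactorial_eq_sum_antidiagonal]
  exact sum_congr rfl fun ij _ => fallingEval_smul_X_pow_mul_X_pow ..

theorem Nat.add_descFactorial_two_mul (a b k : ℕ) :
    (a + b).descFactorial (2 * k) =
      ∑ st ∈ antidiagonal k, ∑ ij ∈ antidiagonal st.2,
        k.choose st.1 * st.2.choose ij.1 * 2 ^ st.1 *
          (a.descFactorial (st.1 + 2 * ij.1) * b.descFactorial (st.1 + 2 * ij.2)) := by
  have hsq : ((X 0 + X 1) ^ (2 * k) : MvPolynomial (Fin 2) ℕ) =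
      (2 * (X 0 * X 1) + (X 0 ^ 2 + X 1 ^ 2)) ^ k := by
    rw [pow_mul]; ring
  rw [← fallingEval_add_pow, hsq, (Commute.all _ _).add_pow', map_sum]
  refine sum_congr rfl fun st _ => ?_
  rw [(Commute.all _ _).add_pow', mul_sum, smul_sum, map_sum]
  refine sum_congr rfl fun ij _ => ?_
  rw [← fallingEval_smul_X_pow_mul_X_pow]
  congr 1
  simp only [nsmul_eq_mul]
  push_cast
  ring

end FallingEval

theorem Finset.sum_range_sum_antidiagonal_sum_antidiagonal {M : Type*} [AddCommMonoid M]
    (K : ℕ) (f : ℕ → ℕ → ℕ → M) :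
    ∑ k ∈ range K, ∑ st ∈ antidiagonal k, ∑ rj ∈ antidiagonal st.2, f st.1 rj.1 rj.2 =
      ∑ s ∈ range K, ∑ r ∈ range (K - s), ∑ j ∈ range (K - s - r), f s r j := by
  simp only [Nat.sum_antidiagonal_eq_sum_range_succ_mk]
  rw [sum_range_diag_flip K fun s t => ∑ r ∈ range (t + 1), f s r (t - r)]
  exact sum_congr rfl fun s _ => sum_range_diag_flip (K - s) (f s)

theorem Finset.sum_range_eq_sum_range_of_eq_zero {M : Type*} [AddCommMonoid M] {f : ℕ → M}
    {a b : ℕ} (hab : a ≤ b) (hf : ∀ i, a ≤ i → i < b → f i = 0) :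
    ∑ i ∈ range a, f i = ∑ i ∈ range b, f i :=
  sum_subset (range_subset_range.2 hab) fun i hb ha => by
    rw [mem_range] at ha hb
    exact hf i (not_lt.1 ha) hb

theorem Finset.sum_range_nested_eq_sum_cube {M : Type*} [AddCommMonoid M]
    {f : ℕ → ℕ → ℕ → M} {A K : ℕ} {B : ℕ → ℕ} {C : ℕ → ℕ → ℕ}
    (hA : A ≤ K) (hB : ∀ s, B s ≤ K) (hC : ∀ s r, C s r ≤ K)
    (hf : ∀ s r j, f s r j ≠ 0 → s < A ∧ r < B s ∧ j < C s r) :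
    ∑ s ∈ range A, ∑ r ∈ range (B s), ∑ j ∈ range (C s r), f s r j =
      ∑ s ∈ range K, ∑ r ∈ range K, ∑ j ∈ range K, f s r j := by
  have hvanish : ∀ s r j, ¬(s < A ∧ r < B s ∧ j < C s r) → f s r j = 0 :=
    fun s r j h => not_not.1 (mt (hf s r j) h)
  calc ∑ s ∈ range A, ∑ r ∈ range (B s), ∑ j ∈ range (C s r), f s r j
      = ∑ s ∈ range A, ∑ r ∈ range (B s), ∑ j ∈ range K, f s r j :=
        sum_congr rfl fun s _ => sum_congr rfl fun r _ =>
          sum_range_eq_sum_range_of_eq_zero (hC s r) fun j hj _ => hvanish s r j (by omega)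
    _ = ∑ s ∈ range A, ∑ r ∈ range K, ∑ j ∈ range K, f s r j :=
        sum_congr rfl fun s _ => sum_range_eq_sum_range_of_eq_zero (hB s) fun r hr _ =>
          sum_eq_zero fun j _ => hvanish s r j (by omega)
    _ = ∑ s ∈ range K, ∑ r ∈ range K, ∑ j ∈ range K, f s r j :=
        sum_range_eq_sum_range_of_eq_zero hA fun s hs _ =>
          sum_eq_zero fun r _ => sum_eq_zero fun j _ => hvanish s r j (by omega)

theorem motzkinAssoc_eq_sum_descFactorial (q n : ℕ) :
    motzkinAssoc q n = ∑ j ∈ range (n / 2 + 1),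
      (n.descFactorial (2 * j) : ℚ) / ((j.factorial : ℚ) * ((j + q).factorial : ℚ)) := by
  rw [motzkinAssoc, mul_sum]
  refine sum_congr rfl fun j hj => ?_
  rw [← Nat.cast_factorial_div_factorial_sub (by rw [mem_range] at hj; omega)]
  field_simp

theorem MAux_eq_sum_descFactorial (p n t : ℕ) :
    MAux p n t = ∑ r ∈ range (p / 2 + 1),
      (p.descFactorial (2 * r) : ℚ) / (r.factorial : ℚ) * motzkinAssoc (t + r + 1) n := by
  rw [MAux, mul_sum]
  refine sum_congr rfl fun r hr => ?_
  rw [← Nat.cast_factorial_div_factorial_sub (by rw [mem_range] at hr; omega)]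
  field_simp

noncomputable def additionTerm (p n s r j : ℕ) : ℚ :=
  2 ^ s * (p.descFactorial (s + 2 * r) : ℚ) * (n.descFactorial (s + 2 * j) : ℚ) /
    ((s.factorial : ℚ) * (r.factorial : ℚ) * (j.factorial : ℚ) *
      ((s + r + j + 1).factorial : ℚ))

theorem additionTerm_eq_zero {p n s r j : ℕ} (h : p < s + 2 * r ∨ n < s + 2 * j) :
    additionTerm p n s r j = 0 := by
  rcases h with h | h <;> simp [additionTerm, Nat.descFactorial_eq_zero_iff_lt.2 h]

theorem two_pow_mul_MAux_eq_sum_additionTerm (p n s : ℕ) :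
    2 ^ s * (s.factorial : ℚ) * (p.choose s : ℚ) * (n.choose s : ℚ) * MAux (p - s) (n - s) s =
      ∑ r ∈ range ((p - s) / 2 + 1), ∑ j ∈ range ((n - s) / 2 + 1),
        additionTerm p n s r j := by
  simp only [MAux_eq_sum_descFactorial, motzkinAssoc_eq_sum_descFactorial, mul_sum]
  refine sum_congr rfl fun r _ => sum_congr rfl fun j _ => ?_
  rw [additionTerm, Nat.descFactorial_add, Nat.descFactorial_add,
    Nat.descFactorial_eq_factorial_mul_choose p, Nat.descFactorial_eq_factorial_mul_choose n,
    show j + (s + r + 1) = s + r + j + 1 by ring]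
  push_cast
  field_simp

theorem sum_antidiagonal_additionTerm (p n k : ℕ) :
    ∑ st ∈ antidiagonal k, ∑ rj ∈ antidiagonal st.2, additionTerm p n st.1 rj.1 rj.2 =
      ((p + n).descFactorial (2 * k) : ℚ) /
        ((k.factorial : ℚ) * ((k + 1).factorial : ℚ)) := by
  rw [Nat.add_descFactorial_two_mul, Nat.cast_sum, sum_div]
  refine sum_congr rfl fun ⟨s, t⟩ hst => ?_
  rw [Nat.cast_sum, sum_div]
  refine sum_congr rfl fun ⟨r, j⟩ hrj => ?_
  rw [HasAntidiagonal.mem_antidiagonal] at hst hrj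
  subst hst hrj
  have hmultinomial : ((s + (r + j)).choose s : ℚ) * ((r + j).choose r : ℚ) *
      ((s.factorial : ℚ) * (r.factorial : ℚ) * (j.factorial : ℚ)) =
        ((s + (r + j)).factorial : ℚ) := by
    rw [← Nat.add_choose_mul_factorial_mul_factorial s (r + j),
      ← Nat.add_choose_mul_factorial_mul_factorial r j, Nat.choose_symm_add, Nat.choose_symm_add]
    push_cast
    ring
  rw [additionTerm, div_eq_div_iff (by positivity) (by positivity),
    show s + r + j + 1 = s + (r + j) + 1 by ring, ← hmultinomial]
  push_cast
  ring

/-- for all `n, p ≥ 0`,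
`m_{n+p} = ∑_{s=0}^{min(n,p)} 2^s s! C(p,s) C(n,s) M_{p-s, n-s, s}`. -/
theorem motzkin_addition_formula (n p : ℕ) :
    motzkin (n + p) =
      ∑ s ∈ range (min n p + 1),
        2 ^ s * (s.factorial : ℚ) * (p.choose s : ℚ) * (n.choose s : ℚ) *
          MAux (p - s) (n - s) s := by
  set K := (n + p) / 2 + 1
  have hsupport : ∀ s r j, additionTerm p n s r j ≠ 0 → s + 2 * r ≤ p ∧ s + 2 * j ≤ n :=
    fun s r j h => by
      by_contra hc
      exact h (additionTerm_eq_zero (by omega))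
  calc motzkin (n + p)
      = ∑ k ∈ range K, ∑ st ∈ antidiagonal k, ∑ rj ∈ antidiagonal st.2,
          additionTerm p n st.1 rj.1 rj.2 := by
        rw [motzkin, motzkinAssoc_eq_sum_descFactorial]
        refine sum_congr rfl fun k _ => ?_
        rw [sum_antidiagonal_additionTerm, add_comm p n]
    _ = ∑ s ∈ range K, ∑ r ∈ range K, ∑ j ∈ range K, additionTerm p n s r j := by
        rw [sum_range_sum_antidiagonal_sum_antidiagonal]
        exact sum_range_nested_eq_sum_cube (by omega) (by omega) (by omega)
          fun s r j h => by have := hsupport s r j h; omega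
    _ = ∑ s ∈ range (min n p + 1),
          ∑ r ∈ range ((p - s) / 2 + 1), ∑ j ∈ range ((n - s) / 2 + 1),
            additionTerm p n s r j :=
        (sum_range_nested_eq_sum_cube (by omega) (by omega) (by omega)
          fun s r j h => by have := hsupport s r j h; omega).symm
    _ = _ := sum_congr rfl fun s _ => (two_pow_mul_MAux_eq_sum_additionTerm p n s).symm
end

section
/- For every integer n ≥ 0, the discrete self-convolution of the Motzkin numbers satisfies ∑_{s=0}^{n} m_{n-s} · m_s = 2·(n+1)·m_n^{(2)}, an identity in the rational numbers. -/
/-!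
Every summand of `m_n^{(q)}` is `C(n, 2r) · (2r)! / (r! (r+q)!)`; for `q = 1` the last factor is
the Catalan number `C_r`, and for `q = 2` the factor `2 (n+1)` turns the summand into
`C(n+1, 2r+1) · C_{r+1}`. So `m_n = ∑_r C(n, 2r) C_r` and `2 (n+1) m_n^{(2)} = ∑_r C(n+1, 2r+1) C_{r+1}`.
Expanding the convolution, the upper Vandermonde identity `∑_s C(s, 2b) C(n-s, 2a) = C(n+1, 2a+2b+1)`
leaves `∑_{a,b} C_a C_b C(n+1, 2(a+b)+1)`, and grouping by `a + b` the Catalan recurrence finishes.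
-/

open Finset

theorem Nat.sum_range_choose_mul_choose (n a b : ℕ) :
    ∑ s ∈ range (n + 1), s.choose a * (n - s).choose b = (n + 1).choose (a + b + 1) := by
  induction n generalizing b with
  | zero =>
    cases a <;> cases b <;> simp <;> exact (Nat.choose_eq_zero_of_lt (by omega)).symm
  | succ n ih =>
    rw [sum_range_succ, Nat.sub_self]
    cases b with
    | zero =>
      have ih₀ := ih 0
      simp only [Nat.choose_zero_right, mul_one, add_zero] at ih₀ ⊢
      rw [ih₀, Nat.choose_succ_succ' (n + 1) a, add_comm]
    | succ b =>
      have pascal : ∀ s ∈ range (n + 1), s.choose a * (n + 1 - s).choose (b + 1) =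
          s.choose a * (n - s).choose b + s.choose a * (n - s).choose (b + 1) := by
        intro s hs
        rw [Nat.sub_add_comm (Nat.lt_succ_iff.mp (mem_range.mp hs)), Nat.choose_succ_succ',
          Nat.mul_add]
      rw [sum_congr rfl pascal, sum_add_distrib, ih, ih, Nat.choose_zero_succ, mul_zero, add_zero,
        ← add_assoc, Nat.choose_succ_succ' (n + 1)]

theorem Nat.cast_catalan {K : Type*} [Field K] [CharZero K] (r : ℕ) :
    (catalan r : K) = (2 * r).factorial / (r.factorial * (r + 1).factorial) := by
  have h := congrArg (Nat.cast : ℕ → K) (succ_mul_catalan_eq_centralBinom r)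
  rw [Nat.centralBinom_eq_two_mul_choose, Nat.cast_choose K (by omega),
    show 2 * r - r = r by omega] at h
  push_cast at h
  rw [Nat.factorial_succ]
  push_cast
  field_simp
  linear_combination h

theorem motzkinAssoc_eq_sum_choose (q n N : ℕ) (hN : n / 2 < N) :
    motzkinAssoc q n = ∑ r ∈ range N,
      (n.choose (2 * r) : ℚ) * ((2 * r).factorial / (r.factorial * (r + q).factorial)) := by
  rw [motzkinAssoc, mul_sum]
  refine sum_subset_zero_on_sdiff (range_subset_range.mpr (by omega)) ?_ ?_
  · intro r hr
    obtain ⟨-, hr⟩ := mem_sdiff.mp hr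
    rw [mem_range, not_lt] at hr
    rw [Nat.choose_eq_zero_of_lt (by omega), Nat.cast_zero, zero_mul]
  · intro r hr
    rw [mem_range] at hr
    rw [Nat.cast_choose ℚ (by omega)]
    field_simp

theorem motzkin_eq_sum_choose_mul_catalan (n N : ℕ) (hN : n / 2 < N) :
    motzkin n = ∑ r ∈ range N, (n.choose (2 * r) : ℚ) * catalan r := by
  simp only [motzkin, motzkinAssoc_eq_sum_choose 1 n N hN, Nat.cast_catalan]

theorem two_mul_succ_mul_motzkinAssoc_two (n N : ℕ) (hN : n / 2 < N) :
    2 * ((n : ℚ) + 1) * motzkinAssoc 2 n =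
      ∑ r ∈ range N, ((n + 1).choose (2 * r + 1) : ℚ) * catalan (r + 1) := by
  rw [motzkinAssoc_eq_sum_choose 2 n N hN, mul_sum]
  refine sum_congr rfl fun r _ => ?_
  have h := congrArg (Nat.cast : ℕ → ℚ) (Nat.add_one_mul_choose_eq n (2 * r))
  rw [Nat.cast_catalan, show 2 * (r + 1) = 2 * r + 1 + 1 by ring, Nat.factorial_succ (2 * r + 1),
    Nat.factorial_succ (2 * r), Nat.factorial_succ (r + 1), Nat.factorial_succ r]
  push_cast at h ⊢
  field_simp
  linear_combination (2 * (r : ℚ) + 2) * h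

theorem sum_range_sum_range_mul_eq_sum_antidiagonal {R : Type*} [CommSemiring R] (N : ℕ)
    (u v f : ℕ → R) (hf : ∀ k, N ≤ k → f k = 0) :
    ∑ a ∈ range N, ∑ b ∈ range N, u a * v b * f (a + b) =
      ∑ m ∈ range N, (∑ ij ∈ antidiagonal m, u ij.1 * v ij.2) * f m := by
  have truncate : ∀ a ∈ range N, ∑ b ∈ range N, u a * v b * f (a + b) =
      ∑ b ∈ range (N - a), u a * v b * f (a + b) := by
    intro a ha
    refine (sum_subset (range_subset_range.mpr (by omega)) fun b _ hb => ?_).symm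
    simp only [mem_range, not_lt] at hb
    rw [hf _ (by omega), mul_zero]
  rw [sum_congr rfl truncate, ← sum_range_diag_flip N fun a b => u a * v b * f (a + b)]
  refine sum_congr rfl fun m _ => ?_
  rw [Nat.sum_antidiagonal_eq_sum_range_succ_mk, sum_mul]
  refine sum_congr rfl fun k hk => ?_
  rw [Nat.add_sub_cancel' (Nat.lt_succ_iff.mp (mem_range.mp hk))]

theorem sum_range_choose_catalan_mul_choose_catalan (n : ℕ) :
    ∑ s ∈ range (n + 1), (∑ a ∈ range (n + 1), (n - s).choose (2 * a) * catalan a) *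
        (∑ b ∈ range (n + 1), s.choose (2 * b) * catalan b) =
      ∑ m ∈ range (n + 1), (n + 1).choose (2 * m + 1) * catalan (m + 1) := by
  have vandermonde : ∀ a b, ∑ s ∈ range (n + 1),
      (n - s).choose (2 * a) * catalan a * (s.choose (2 * b) * catalan b) =
        catalan a * catalan b * (n + 1).choose (2 * (a + b) + 1) := by
    intro a b
    rw [← show 2 * b + 2 * a + 1 = 2 * (a + b) + 1 by ring,
      ← Nat.sum_range_choose_mul_choose, mul_sum]
    exact sum_congr rfl fun s _ => by ring
  calc _ = ∑ a ∈ range (n + 1), ∑ b ∈ range (n + 1),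
          catalan a * catalan b * (n + 1).choose (2 * (a + b) + 1) := by
        simp_rw [sum_mul_sum]
        rw [sum_comm]
        refine sum_congr rfl fun a _ => ?_
        rw [sum_comm]
        exact sum_congr rfl fun b _ => vandermonde a b
    _ = _ := by
        rw [sum_range_sum_range_mul_eq_sum_antidiagonal (n + 1) catalan catalan
          (fun m => (n + 1).choose (2 * m + 1)) fun m hm => Nat.choose_eq_zero_of_lt (by omega)]
        simp_rw [← catalan_succ', mul_comm]

/-- the discrete self-convolution of the Motzkin numbers:
`∑_{s=0}^{n} m_{n-s} m_s = 2 (n+1) m_n^{(2)}`. -/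
theorem motzkin_self_convolution (n : ℕ) :
    ∑ s ∈ range (n + 1), motzkin (n - s) * motzkin s =
      2 * ((n : ℚ) + 1) * motzkinAssoc 2 n := by
  rw [two_mul_succ_mul_motzkinAssoc_two n (n + 1) (by omega)]
  have h := congrArg (Nat.cast : ℕ → ℚ) (sum_range_choose_catalan_mul_choose_catalan n)
  push_cast at h
  rw [← h]
  refine sum_congr rfl fun s hs => ?_
  rw [mem_range] at hs
  rw [motzkin_eq_sum_choose_mul_catalan (n - s) (n + 1) (by omega),
    motzkin_eq_sum_choose_mul_catalan s (n + 1) (by omega)]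
end

section
/- For every integer n ≥ 0, the telephone numbers satisfy the index-duplication identity T(2n) = ∑_{r=0}^{n} binomial(n,r)² · r! · (T(n-r))². -/
/-!
`T(n)` counts the involutions of an `n`-set. An involution of the disjoint union of an `m`-set
and an `n`-set consists of the `k` transpositions crossing between the two parts (a `k`-edge
matching, chosen in `C(m,k) C(n,k) k!` ways) and involutions of the `m - k` and `n - k` points
left over, so `T(m + n) = ∑ₖ C(m,k) C(n,k) k! T(m-k) T(n-k)`; duplication is the case `m = n`.
The proof is algebraic: from `T(j + 1) = T(j) + j T(j - 1)` alone, Pascal's rule shows that the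
right side `A(m, n)` obeys `A(m + 1, n) = A(m, n) + m A(m - 1, n) + n A(m, n - 1)`, the recurrence
that `T(m + n + 1) = T(m + n) + (m + n) T(m + n - 1)` splits into.
-/

open Finset

/-- The telephone numbers `T(n) = n! ∑_{r=0}^{⌊n/2⌋} 1/((n-2r)!·r!·2^r)`,
as rational numbers. -/
noncomputable def telephone (n : ℕ) : ℚ :=
  (n.factorial : ℚ) * ∑ r ∈ range (n / 2 + 1),
    1 / (((n - 2 * r).factorial : ℚ) * (r.factorial : ℚ) * 2 ^ r)

open Nat

/-- `C(n, 2r) (2r-1)‼` is the number of involutions of an `n`-set with exactly `r`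
transpositions. -/
def telephoneTerm (n r : ℕ) : ℕ := n.choose (2 * r) * (2 * r - 1)‼

lemma telephoneTerm_zero_right (n : ℕ) : telephoneTerm n 0 = 1 := by
  simp [telephoneTerm]

lemma telephoneTerm_eq_zero {n r : ℕ} (h : n < 2 * r) : telephoneTerm n r = 0 := by
  simp [telephoneTerm, Nat.choose_eq_zero_of_lt h]

lemma telephoneTerm_add_two_succ (n r : ℕ) :
    telephoneTerm (n + 2) (r + 1) =
      telephoneTerm (n + 1) (r + 1) + (n + 1) * telephoneTerm n r := by
  have hchoose := Nat.add_one_mul_choose_eq n (2 * r)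
  have hdouble := Nat.doubleFactorial_add_one (2 * r)
  have hidx : 2 * (r + 1) - 1 = 2 * r + 1 := by omega
  rw [telephoneTerm, telephoneTerm, telephoneTerm, hidx, mul_add 2 r 1, mul_one,
    Nat.choose_succ_succ' (n + 1), hdouble, ← mul_assoc (n + 1), Nat.add_one_mul_choose_eq]
  ring

lemma factorial_eq_doubleFactorial_mul (n : ℕ) : n ! = n‼ * (n - 1)‼ := by
  cases n with
  | zero => rfl
  | succ n => exact Nat.factorial_eq_mul_doubleFactorial n

lemma telephoneTerm_mul_eq_factorial {n r : ℕ} (h : 2 * r ≤ n) :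
    telephoneTerm n r * ((n - 2 * r)! * r ! * 2 ^ r) = n ! := by
  rw [← Nat.choose_mul_factorial_mul_factorial h, factorial_eq_doubleFactorial_mul (2 * r),
    Nat.doubleFactorial_two_mul, telephoneTerm]
  ring

lemma telephone_eq_sum_range {n N : ℕ} (hN : n / 2 < N) :
    telephone n = ∑ r ∈ range N, (telephoneTerm n r : ℚ) := by
  rw [telephone, mul_sum, ← sum_subset (range_subset_range.mpr hN)]
  · refine sum_congr rfl fun r hr => ?_
    have h2r : 2 * r ≤ n := by rw [mem_range] at hr; omega
    rw [← telephoneTerm_mul_eq_factorial h2r]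
    push_cast
    field_simp
  · intro r _ hr
    rw [telephoneTerm_eq_zero (by rw [mem_range] at hr; omega), Nat.cast_zero]

lemma telephone_zero : telephone 0 = 1 := by
  simp [telephone]

lemma telephone_add_two (n : ℕ) :
    telephone (n + 2) = telephone (n + 1) + (n + 1) * telephone n := by
  rw [telephone_eq_sum_range (N := n + 3) (by omega),
    telephone_eq_sum_range (N := n + 3) (by omega), telephone_eq_sum_range (N := n + 2) (by omega),
    sum_range_succ', sum_range_succ' _ (n + 2)]
  simp only [telephoneTerm_add_two_succ, telephoneTerm_zero_right, Nat.cast_add, Nat.cast_mul,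
    sum_add_distrib, ← mul_sum]
  push_cast
  ring

lemma telephone_succ (n : ℕ) : telephone (n + 1) = telephone n + n * telephone (n - 1) := by
  cases n with
  | zero => simp [telephone]
  | succ n => simpa using telephone_add_two n

lemma choose_mul_sub_eq_choose_pred_mul (m k : ℕ) :
    m.choose k * (m - k) = (m - 1).choose k * m := by
  cases m with
  | zero => simp
  | succ m => exact (Nat.choose_mul_succ_eq m k).symm

section CrossMatching

variable {R : Type*} [CommSemiring R] (f : ℕ → R)

/-- `m.choose k * n.choose k * k !` counts the `k`-edge matchings between an `m`-set and an
`n`-set. -/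
def crossMatchingSum (m n : ℕ) : R :=
  ∑ k ∈ range (n + 1), (m.choose k * n.choose k * k ! : ℕ) * f (m - k) * f (n - k)

lemma crossMatchingSum_zero_left (n : ℕ) : crossMatchingSum f 0 n = f 0 * f n := by
  rw [crossMatchingSum, sum_range_succ']
  simp

variable {f}

lemma choose_mul_apply_succ_sub (hf : ∀ j, f (j + 1) = f j + j * f (j - 1)) (m k : ℕ) :
    (m.choose k : R) * f (m + 1 - k) =
      m.choose k * f (m - k) + (m - 1).choose k * m * f (m - 1 - k) := by
  rcases le_or_gt k m with hkm | hmk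
  · rw [show m + 1 - k = m - k + 1 by omega, hf, show m - k - 1 = m - 1 - k by omega,
      ← Nat.cast_mul, ← choose_mul_sub_eq_choose_pred_mul, Nat.cast_mul]
    ring
  · simp [Nat.choose_eq_zero_of_lt hmk, Nat.choose_eq_zero_of_lt (show m - 1 < k by omega)]

lemma crossMatchingSum_succ_left (hf : ∀ j, f (j + 1) = f j + j * f (j - 1)) (m n : ℕ) :
    crossMatchingSum f (m + 1) n =
      crossMatchingSum f m n + m * crossMatchingSum f (m - 1) n +
        n * crossMatchingSum f m (n - 1) := by
  cases n with
  | zero =>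
    simp only [crossMatchingSum, zero_add, sum_range_one, Nat.choose_zero_right, Nat.sub_zero, hf]
    push_cast
    ring
  | succ n =>
    have hpascal : crossMatchingSum f (m + 1) (n + 1) =
        (∑ k ∈ range (n + 2),
          (m.choose k * (n + 1).choose k * k ! : ℕ) * f (m + 1 - k) * f (n + 1 - k)) +
        ∑ k ∈ range (n + 1),
          (m.choose k * (n + 1).choose (k + 1) * (k + 1)! : ℕ) * f (m - k) * f (n - k) := by
      rw [crossMatchingSum, sum_range_succ', sum_range_succ' _ (n + 1), add_right_comm,
        ← sum_add_distrib]
      congr 1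
      · refine sum_congr rfl fun k _ => ?_
        rw [Nat.choose_succ_succ' m, Nat.add_sub_add_right, Nat.add_sub_add_right]
        push_cast
        ring
      · simp
    have hleft : (∑ k ∈ range (n + 2),
          (m.choose k * (n + 1).choose k * k ! : ℕ) * f (m + 1 - k) * f (n + 1 - k)) =
        crossMatchingSum f m (n + 1) + m * crossMatchingSum f (m - 1) (n + 1) := by
      rw [crossMatchingSum, crossMatchingSum, mul_sum, ← sum_add_distrib]
      refine sum_congr rfl fun k _ => ?_
      push_cast
      calc _ = (m.choose k * f (m + 1 - k) : R) * ((n + 1).choose k * k ! * f (n + 1 - k)) := by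
            ring
        _ = _ := by rw [choose_mul_apply_succ_sub hf]; ring
    have hright : (∑ k ∈ range (n + 1),
          (m.choose k * (n + 1).choose (k + 1) * (k + 1)! : ℕ) * f (m - k) * f (n - k)) =
        (n + 1 : ℕ) * crossMatchingSum f m n := by
      rw [crossMatchingSum, mul_sum]
      refine sum_congr rfl fun k _ => ?_
      have hchoose : (n + 1).choose (k + 1) * (k + 1)! = (n + 1) * (n.choose k * k !) := by
        rw [Nat.factorial_succ, ← mul_assoc, ← Nat.add_one_mul_choose_eq]
        ring
      rw [mul_assoc (m.choose k), hchoose]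
      push_cast
      ring
    rw [hpascal, hleft, hright, Nat.add_sub_cancel]

theorem crossMatchingSum_eq (hf0 : f 0 = 1) (hf : ∀ j, f (j + 1) = f j + j * f (j - 1))
    (m n : ℕ) :
    crossMatchingSum f m n = f (m + n) := by
  induction m using Nat.strong_induction_on generalizing n with
  | _ m ih =>
    cases m with
    | zero => rw [crossMatchingSum_zero_left, hf0, one_mul, zero_add]
    | succ m =>
      have hpred : (m : R) * crossMatchingSum f (m - 1) n = m * f (m + n - 1) := by
        cases m with
        | zero => simp
        | succ m =>
          rw [Nat.add_sub_cancel, ih m (by omega), Nat.add_right_comm, Nat.add_sub_cancel]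
      have hshift : (n : R) * f (m + (n - 1)) = n * f (m + n - 1) := by
        cases n with
        | zero => simp
        | succ n => rw [Nat.add_sub_cancel, ← add_assoc, Nat.add_sub_cancel]
      rw [crossMatchingSum_succ_left hf, ih m (by omega), ih m (by omega), hpred, hshift,
        Nat.add_right_comm, hf, Nat.cast_add]
      ring

end CrossMatching

/-- the index-duplication identity
`T(2n) = ∑_{r=0}^{n} C(n,r)² r! (T(n-r))²`. -/
theorem telephone_duplication (n : ℕ) :
    telephone (2 * n) =
      ∑ r ∈ range (n + 1),
        ((n.choose r : ℚ)) ^ 2 * (r.factorial : ℚ) * (telephone (n - r)) ^ 2 := by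
  rw [two_mul, ← crossMatchingSum_eq telephone_zero telephone_succ n n, crossMatchingSum]
  refine sum_congr rfl fun r _ => ?_
  push_cast
  ring
end
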